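/- arXiv:quant-ph/0312102 — 3 statements merged into one kernel-verified Lean document; each statement's English description precedes it below -/
import Mathlib

section
/- (Partitioned QCA theorem) Let e : Q^3 → Q and g : Q → C^Q, and let f = g ∘ e. If (i) the global transition function F_e : Q^n → Q^n, defined by F_e(q)_i = e(q_{i-1}, q_i, q_{i+1}) with cyclic indices, is a bijection, and (ii) the matrix (λ_{ij}) with λ_{pq} = g(p)(q) is unitary, then the linear extension of the quantum global transition F_f : Q^n → C^(Q^n), defined by F_f(q)(x) = ∏_i f(q_{i-1}, q_i, q_{i+1})(x_i), is unitary. -/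
open scoped BigOperators

/-- View a function `ι → ℂ` as an element of `ℂ^ι`. -/
def toE {ι : Type*} [Fintype ι] (f : ι → ℂ) : EuclideanSpace ℂ ι := WithLp.toLp 2 f

/-- The linear extension `F̄(X) = Σ_q X(q) • F(q)`. -/
noncomputable def ext {ι : Type*} [Fintype ι]
    (F : ι → EuclideanSpace ℂ ι) (X : EuclideanSpace ℂ ι) : EuclideanSpace ℂ ι :=
  ∑ q, X q • F q

open scoped ComplexConjugate InnerProductSpace

theorem partitioned_qca {Q : Type*} [Fintype Q] [DecidableEq Q]
    {n : ℕ} [NeZero n] (hn : 3 ≤ n)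
    (e : Q → Q → Q → Q) (g : Q → EuclideanSpace ℂ Q)
    (hFe : Function.Bijective
      (fun q : ZMod n → Q => fun i => e (q (i - 1)) (q i) (q (i + 1))))
    (hΛ : (Matrix.of fun p q : Q => g p q) ∈ Matrix.unitaryGroup Q ℂ) :
    ∀ X : EuclideanSpace ℂ (ZMod n → Q), ‖X‖ = 1 →
      ‖ext (fun q : ZMod n → Q =>
        toE fun x => ∏ i, g (e (q (i - 1)) (q i) (q (i + 1))) (x i)) X‖ = 1 := by
  intro X hX
  set E : (ZMod n → Q) → (ZMod n → Q) := fun q => fun i => e (q (i - 1)) (q i) (q (i + 1))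
    with hE
  set F : (ZMod n → Q) → EuclideanSpace ℂ (ZMod n → Q) :=
    fun q => toE fun x => ∏ i, g (E q i) (x i) with hF
  -- single-site orthonormality from unitarity
  have hsite : ∀ p p' : Q, (∑ y, conj (g p y) * g p' y) = if p = p' then 1 else 0 := by
    intro p p'
    have h := Matrix.mem_unitaryGroup_iff.mp hΛ
    have h2 := congrArg (fun M => M p p') h
    simp only [Matrix.mul_apply, Matrix.one_apply, Matrix.star_apply,
      Matrix.of_apply, RCLike.star_def] at h2
    calc ∑ y, conj (g p y) * g p' y
        = conj (∑ x, g p x * conj (g p' x)) := by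
          simp [map_sum, mul_comm]
      _ = if p = p' then 1 else 0 := by rw [h2]; split <;> simp
  have horth : Orthonormal ℂ F := by
    rw [orthonormal_iff_ite]
    intro q q'
    have : ⟪F q, F q'⟫_ℂ = ∏ i, ∑ y, conj (g (E q i) y) * g (E q' i) y := by
      rw [Finset.prod_univ_sum]
      simp only [Fintype.piFinset_univ]
      simp [hF, toE, PiLp.inner_apply, RCLike.inner_apply, map_prod,
        Finset.prod_mul_distrib]
      exact Finset.sum_congr rfl fun _ _ => mul_comm _ _
    rw [this]
    simp only [hsite]
    by_cases hqq : q = q'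
    · simp [hqq]
    · have hEq : E q ≠ E q' := fun h => hqq (hFe.1 h)
      obtain ⟨i, hi⟩ := Function.ne_iff.mp hEq
      rw [if_neg hqq]
      exact Finset.prod_eq_zero (Finset.mem_univ i) (by simp [hi])
  -- now compute the norm
  have hinner : ⟪ext F X, ext F X⟫_ℂ = ∑ q, conj (X q) * X q := by
    rw [ext, inner_sum]
    congr 1
    funext q
    rw [inner_smul_right, horth.inner_left_fintype]
    ring
  have hn2 : ‖ext F X‖ ^ 2 = ‖X‖ ^ 2 := by
    have h1 : (‖ext F X‖ : ℂ) ^ 2 = ⟪ext F X, ext F X⟫_ℂ := by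
      rw [inner_self_eq_norm_sq_to_K]; norm_cast
    have h2 : (‖X‖ : ℂ) ^ 2 = ⟪X, X⟫_ℂ := by rw [inner_self_eq_norm_sq_to_K]; norm_cast
    have h3 : ⟪X, X⟫_ℂ = ∑ q, conj (X q) * X q := by
      rw [PiLp.inner_apply]; simp only [RCLike.inner_apply]
      exact Finset.sum_congr rfl fun _ _ => by ring
    have : (‖ext F X‖ : ℂ) ^ 2 = (‖X‖ : ℂ) ^ 2 := by rw [h1, hinner, h2, h3]
    exact_mod_cast this
  have h4 : ‖ext F X‖ ^ 2 = 1 := by rw [hn2, hX]; norm_num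
  nlinarith [norm_nonneg (ext F X)]
end

section
/- Let f : Q^3 → Q be a classical local rule and [f] : Q^3 → C^Q the rule sending (a,b,c) to the indicator of f(a,b,c). Then the linear extension of the quantum global transition F_{[f]} is unitary if and only if the classical global transition F_f : Q^n → Q^n is a bijection. -/
open scoped BigOperators

/-- Indicator (basis) vector `[q] ∈ ℂ^Q`. -/
noncomputable def ind {Q : Type*} [DecidableEq Q] (q : Q) : Q → ℂ :=
  fun x => if x = q then 1 else 0

lemma prod_ind {Q : Type*} [DecidableEq Q] {ι : Type*} [Fintype ι]
    (g x : ι → Q) : (∏ i, ind (g i) (x i)) = if x = g then 1 else 0 := by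
  by_cases h : x = g
  · subst h; simp [ind]
  · obtain ⟨i, hi⟩ := Function.ne_iff.mp h
    rw [if_neg h]
    exact Finset.prod_eq_zero (Finset.mem_univ i) (by simp [ind, hi])

theorem quantized_rule_unitary_iff_global_bijective
    {Q : Type*} [Fintype Q] [DecidableEq Q] {n : ℕ} [NeZero n] (hn : 3 ≤ n)
    (f : Q → Q → Q → Q) :
    (∀ X : EuclideanSpace ℂ (ZMod n → Q), ‖X‖ = 1 →
      ‖ext (fun q : ZMod n → Q =>
        toE fun x => ∏ i, ind (f (q (i - 1)) (q i) (q (i + 1))) (x i)) X‖ = 1) ↔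
    Function.Bijective
      (fun q : ZMod n → Q => fun i => f (q (i - 1)) (q i) (q (i + 1))) := by
  set G : (ZMod n → Q) → (ZMod n → Q) :=
    fun q => fun i => f (q (i - 1)) (q i) (q (i + 1)) with hG
  set F : (ZMod n → Q) → EuclideanSpace ℂ (ZMod n → Q) :=
    fun q => toE fun x => ∏ i, ind (f (q (i - 1)) (q i) (q (i + 1))) (x i) with hF
  have hFx : ∀ q x, F q x = if x = G q then 1 else 0 := by
    intro q x
    simpa [hF, toE] using prod_ind (G q) x
  have hextx : ∀ (X : EuclideanSpace ℂ (ZMod n → Q)) x,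
      ext F X x = ∑ q, (if x = G q then X q else 0) := by
    intro X x
    show (∑ q, X q • F q) x = _
    rw [WithLp.ofLp_sum, Finset.sum_apply]
    refine Finset.sum_congr rfl fun q _ => ?_
    show X q * F q x = _
    rw [hFx]
    by_cases h : x = G q <;> simp [h]
  constructor
  · intro hnorm
    rw [← Finite.injective_iff_bijective]
    intro a b hab
    by_contra hne
    set c : ℂ := ((Real.sqrt 2 : ℝ) : ℂ)⁻¹ with hc
    have hcn : ‖c‖ ^ 2 = (2:ℝ)⁻¹ := by
      rw [hc, norm_inv, Complex.norm_real, Real.norm_eq_abs,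
        abs_of_nonneg (Real.sqrt_nonneg 2), inv_pow, Real.sq_sqrt (by norm_num)]
    set X : EuclideanSpace ℂ (ZMod n → Q) :=
      toE fun q => if q = a then c else if q = b then -c else 0 with hX
    have hXq : ∀ q, X q = if q = a then c else if q = b then -c else 0 :=
      fun q => by rw [hX]; rfl
    have hXnorm : ‖X‖ = 1 := by
      rw [EuclideanSpace.norm_eq]
      have : ∀ q, ‖X q‖ ^ 2 =
          (if q = a then 2⁻¹ else 0) + (if q = b then 2⁻¹ else 0) := by
        intro q
        by_cases h1 : q = a
        · subst h1; simp [hXq, hne, hcn]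
        · by_cases h2 : q = b
          · subst h2; simp [hXq, h1, hcn]
          · simp [hXq, h1, h2]
      simp only [this, Finset.sum_add_distrib, Finset.sum_ite_eq',
        Finset.mem_univ, if_true]
      norm_num
    have hzero : ext F X = 0 := by
      ext x
      rw [hextx]
      have key : ∀ q, (if x = G q then X q else 0)
          = (if q = a then (if x = G a then c else 0) else 0)
            + (if q = b then (if x = G a then -c else 0) else 0) := by
        intro q
        by_cases h1 : q = a
        · subst h1; simp [hXq, hne]
        · by_cases h2 : q = b
          · subst h2; simp [hXq, h1, hab]
          · simp [hXq, h1, h2]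
      simp only [key, Finset.sum_add_distrib, Finset.sum_ite_eq',
        Finset.mem_univ, if_true]
      show (if x = G a then c else 0) + (if x = G a then -c else 0)
        = (0 : EuclideanSpace ℂ (ZMod n → Q)) x
      by_cases h : x = G a <;> simp [h]
    have := hnorm X hXnorm
    rw [hzero] at this
    simp at this
  · intro hbij X hXnorm
    set e := Equiv.ofBijective G hbij with he
    have hval : ∀ x, ext F X x = X (e.symm x) := by
      intro x
      rw [hextx]
      rw [Finset.sum_eq_single (e.symm x)]
      · rw [if_pos]
        show x = e (e.symm x)
        simp
      · intro q _ hq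
        rw [if_neg]
        intro h
        exact hq (by rw [show G q = e q from rfl] at h; simpa using congrArg e.symm h.symm)
      · simp
    rw [EuclideanSpace.norm_eq] at hXnorm ⊢
    rw [← hXnorm]
    congr 1
    rw [← Equiv.sum_comp e.symm (fun q => ‖X q‖ ^ 2)]
    exact Finset.sum_congr rfl fun x _ => by rw [hval]
end

section
/- Let Q = {0,1}×{0,1}, e((a₁,b₁),(a₂,b₂),(a₃,b₃)) = (a₁, b₃), and g : Q → C^Q given by the permutation fixing (0,0) and (0,1) and swapping (1,0) with (1,1) (composed with taking indicator functions). Then f = g ∘ e satisfies f((a₁,b₁),(a₂,b₂),(a₃,b₃)) = indicator of (a₁, a₁ ⊕ b₃), and the cyclic global map F_e : Q^n → Q^n is a bijection, so f forms a QCA. -/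
open scoped BigOperators

/-- `e((a₁,b₁),(a₂,b₂),(a₃,b₃)) = (a₁,b₃)`. -/
def e₂ (c₁ _c₂ c₃ : ZMod 2 × ZMod 2) : ZMod 2 × ZMod 2 := (c₁.1, c₃.2)

/-- `g`: the permutation fixing (0,0),(0,1) and swapping (1,0),(1,1),
composed with indicator functions, i.e. `g(a,b) = [(a, a ⊕ b)]`. -/
noncomputable def g₂ (p : ZMod 2 × ZMod 2) : EuclideanSpace ℂ (ZMod 2 × ZMod 2) :=
  toE (ind (p.1, p.1 + p.2))

private lemma z2aux : ∀ a b : ZMod 2, a + (a + b) = b := by decide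

/-- The global map for `e₂` as an equivalence. -/
def Eeq (n : ℕ) [NeZero n] : (ZMod n → ZMod 2 × ZMod 2) ≃ (ZMod n → ZMod 2 × ZMod 2) where
  toFun q i := ((q (i - 1)).1, (q (i + 1)).2)
  invFun r i := ((r (i + 1)).1, (r (i - 1)).2)
  left_inv q := by funext i; simp
  right_inv r := by funext i; simp

/-- The global map for `f = g ∘ e` (at the level of configurations) as an equivalence. -/
def Geq (n : ℕ) [NeZero n] : (ZMod n → ZMod 2 × ZMod 2) ≃ (ZMod n → ZMod 2 × ZMod 2) where
  toFun q i := ((q (i - 1)).1, (q (i - 1)).1 + (q (i + 1)).2)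
  invFun r i := ((r (i + 1)).1, (r (i - 1)).1 + (r (i - 1)).2)
  left_inv q := by
    funext i
    simp only [add_sub_cancel_right, sub_add_cancel, sub_add_cancel_left, add_sub_cancel_left]
    exact Prod.ext rfl (z2aux _ _)
  right_inv r := by
    funext i
    simp only [add_sub_cancel_right, sub_add_cancel, sub_add_cancel_left, add_sub_cancel_left]
    exact Prod.ext rfl (z2aux _ _)

theorem controlled_not_qca {n : ℕ} [NeZero n] (hn : 3 ≤ n) :
    (∀ c₁ c₂ c₃ : ZMod 2 × ZMod 2,
      g₂ (e₂ c₁ c₂ c₃) = toE (ind (c₁.1, c₁.1 + c₃.2))) ∧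
    Function.Bijective
      (fun q : ZMod n → ZMod 2 × ZMod 2 => fun i => e₂ (q (i - 1)) (q i) (q (i + 1))) ∧
    (∀ X : EuclideanSpace ℂ (ZMod n → ZMod 2 × ZMod 2), ‖X‖ = 1 →
      ‖ext (fun q : ZMod n → ZMod 2 × ZMod 2 =>
        toE fun x => ∏ i, g₂ (e₂ (q (i - 1)) (q i) (q (i + 1))) (x i)) X‖ = 1) := by
  refine ⟨fun c₁ c₂ c₃ => rfl, (Eeq n).bijective, ?_⟩
  intro X hX
  have hprod : ∀ (q x : ZMod n → ZMod 2 × ZMod 2),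
      (∏ i, g₂ (e₂ (q (i - 1)) (q i) (q (i + 1))) (x i))
        = ind ((Geq n) q) x := by
    intro q x
    have : ∀ i : ZMod n, g₂ (e₂ (q (i - 1)) (q i) (q (i + 1))) (x i)
        = if x i = (Geq n q) i then (1 : ℂ) else 0 := fun i => rfl
    simp only [this, Finset.prod_boole]
    simp [ind, funext_iff]
  have hext : ext (fun q : ZMod n → ZMod 2 × ZMod 2 =>
      toE fun x => ∏ i, g₂ (e₂ (q (i - 1)) (q i) (q (i + 1))) (x i)) X
      = toE fun x => X ((Geq n).symm x) := by
    ext x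
    have happ : ext (fun q : ZMod n → ZMod 2 × ZMod 2 =>
        toE fun x => ∏ i, g₂ (e₂ (q (i - 1)) (q i) (q (i + 1))) (x i)) X x
        = ∑ q, X q * (∏ i, g₂ (e₂ (q (i - 1)) (q i) (q (i + 1))) (x i)) := by
      rw [ext, WithLp.ofLp_sum]; erw [Finset.sum_apply]; rfl
    rw [happ]
    simp only [hprod, ind]
    rw [Finset.sum_congr rfl (fun q _ => ?_), Finset.sum_ite_eq' Finset.univ ((Geq n).symm x)
      (fun q => X q)]
    · simp [toE]
    · have : x = (Geq n) q ↔ q = (Geq n).symm x := by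
        constructor
        · intro h; simp [h]
        · intro h; simp [h]
      simp only [mul_ite, mul_one, mul_zero, this]
  rw [hext]
  rw [EuclideanSpace.norm_eq] at hX ⊢
  rw [show (∑ x, ‖toE (fun x => X ((Geq n).symm x)) x‖ ^ 2)
      = ∑ q, ‖X q‖ ^ 2 from Equiv.sum_comp (Geq n).symm (fun q => ‖X q‖ ^ 2)]
  exact hX
end
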